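/- Let C₁ be the quotient of the free noncommutative ℤ/2-algebra on two generators a₁, a₂ by the two-sided ideal generated by a₁a₂ − 1 and a₂a₁ − 1, and let C₂ be the quotient of the free noncommutative ℤ/2-algebra on three generators a₁, a₂, a₃ by the two-sided ideal generated by a₂a₁ − 1 and a₂a₃ − 1. Then there is no ℤ/2-algebra isomorphism between C₁ and C₂. -/

import Mathlib

noncomputable section

/-- The quotient of a ℤ/2-algebra by a ring congruence is again a ℤ/2-algebra,
via the quotient map. -/
noncomputable instance ringConQuotientAlgebra
    {R : Type*} [Ring R] [Algebra (ZMod 2) R] (c : RingCon R) :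
    Algebra (ZMod 2) c.Quotient :=
  RingHom.toAlgebra' ((RingCon.mk' c).comp (algebraMap (ZMod 2) R)) (by
    intro r x
    fin_cases r
    · exact (by simp : ((RingCon.mk' c).comp (algebraMap (ZMod 2) R)) 0 * x = x * ((RingCon.mk' c).comp (algebraMap (ZMod 2) R)) 0)
    · exact (by simp : ((RingCon.mk' c).comp (algebraMap (ZMod 2) R)) 1 * x = x * ((RingCon.mk' c).comp (algebraMap (ZMod 2) R)) 1))

/-- The generators of the free ℤ/2-algebra on two letters. -/
def b (i : Fin 2) : FreeAlgebra (ZMod 2) (Fin 2) := FreeAlgebra.ι (ZMod 2) i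

/-- The generators of the free ℤ/2-algebra on three letters. -/
def c (i : Fin 3) : FreeAlgebra (ZMod 2) (Fin 3) := FreeAlgebra.ι (ZMod 2) i

/-- The simplified characteristic algebra
`C₁ = ℤ₂⟨a₁, a₂⟩/(a₁a₂ − 1, a₂a₁ − 1)`. -/
def C1 := (TwoSidedIdeal.span {b 0 * b 1 - 1, b 1 * b 0 - 1}).ringCon.Quotient

instance : Ring C1 :=
  inferInstanceAs (Ring (TwoSidedIdeal.span {b 0 * b 1 - 1, b 1 * b 0 - 1}).ringCon.Quotient)
instance : Algebra (ZMod 2) C1 :=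
  inferInstanceAs
    (Algebra (ZMod 2) (TwoSidedIdeal.span {b 0 * b 1 - 1, b 1 * b 0 - 1}).ringCon.Quotient)

/-- The simplified characteristic algebra
`C₂ = ℤ₂⟨a₁, a₂, a₃⟩/(a₂a₁ − 1, a₂a₃ − 1)`. -/
def C2 := (TwoSidedIdeal.span {c 1 * c 0 - 1, c 1 * c 2 - 1}).ringCon.Quotient

instance : Ring C2 :=
  inferInstanceAs (Ring (TwoSidedIdeal.span {c 1 * c 0 - 1, c 1 * c 2 - 1}).ringCon.Quotient)
instance : Algebra (ZMod 2) C2 :=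
  inferInstanceAs
    (Algebra (ZMod 2) (TwoSidedIdeal.span {c 1 * c 0 - 1, c 1 * c 2 - 1}).ringCon.Quotient)

/-!
Being commutative is invariant under isomorphism. `C₁` is commutative, since it is generated
by `a₁` and its inverse `a₂`. `C₂` is not: there `a₂` has the two right inverses `a₁` and `a₃`,
which would coincide if `a₂` were invertible, and they are distinct because `C₂` acts on
sequences with `a₂` the left shift and `a₁`, `a₃` the right shifts prepending `0` and the first
term respectively.
-/

namespace TwoSidedIdeal

variable {R P : Type*} [Ring R] [Ring P] {s : Set R}

theorem mk'_span_mul_eq_one {u v : R} (h : u * v - 1 ∈ s) :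
    (span s).ringCon.mk' u * (span s).ringCon.mk' v = 1 := by
  rw [← map_mul, ← map_one (span s).ringCon.mk']
  exact (RingCon.eq _).mpr ((rel_iff _ _ _).mpr (subset_span h))

def liftSpan (f : R →+* P) (hf : ∀ x ∈ s, f x = 0) : (span s).ringCon.Quotient →+* P :=
  RingCon.lift _ f <| (ringCon_le_iff.mp (span_le.mpr fun x hx => (mem_ker f).mpr (hf x hx)))

end TwoSidedIdeal

namespace Algebra

variable {R A : Type*} [CommSemiring R] [Semiring A] [Algebra R A] {s : Set A}

theorem commute_of_adjoin_eq_top (hs : adjoin R s = ⊤)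
    (hcomm : ∀ a ∈ s, ∀ b ∈ s, Commute a b) (x y : A) : Commute x y :=
  commute_of_mem_adjoin_of_forall_mem_commute (hs ▸ mem_top) fun b hb =>
    (commute_of_mem_adjoin_of_forall_mem_commute (hs ▸ mem_top) fun a ha =>
      hcomm b hb a ha).symm

end Algebra

section Sequences

variable {R M : Type*} [Semiring R] [AddCommMonoid M] [Module R M]

def seqShift : Module.End R (ℕ → M) := LinearMap.funLeft R M Nat.succ

def seqCons (φ : (ℕ → M) →ₗ[R] M) : Module.End R (ℕ → M) where
  toFun x
    | 0 => φ x
    | n + 1 => x n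
  map_add' x y := by funext n; cases n <;> simp
  map_smul' r x := by funext n; cases n <;> simp

theorem seqShift_mul_seqCons (φ : (ℕ → M) →ₗ[R] M) : seqShift * seqCons φ = 1 :=
  rfl

theorem seqCons_injective : Function.Injective (seqCons : ((ℕ → M) →ₗ[R] M) → _) :=
  fun _ _ h => LinearMap.ext fun x => congrFun (LinearMap.congr_fun h x) 0

end Sequences

theorem not_forall_commute_of_right_inverses_ne {M : Type*} [Monoid M] {a b c : M}
    (hba : b * a = 1) (hbc : b * c = 1) (hac : a ≠ c) : ¬ ∀ x y : M, Commute x y :=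
  fun h => hac (left_inv_eq_right_inv ((h a b).eq.trans hba) hbc)

namespace C1

def mk : FreeAlgebra (ZMod 2) (Fin 2) →ₐ[ZMod 2] C1 :=
  { RingCon.mk' _ with commutes' := fun _ => rfl }

theorem mk_surjective : Function.Surjective mk := RingCon.mk'_surjective _

theorem adjoin_range_mk_comp_b : Algebra.adjoin (ZMod 2) (Set.range (mk ∘ b)) = ⊤ := by
  rw [Algebra.adjoin_range_eq_range_freeAlgebra_lift, AlgHom.range_eq_top]
  convert mk_surjective
  exact FreeAlgebra.lift_comp_ι mk

theorem commute_mk_b (i j : Fin 2) : Commute (mk (b i)) (mk (b j)) := by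
  have h : Commute (mk (b 0)) (mk (b 1)) :=
    (TwoSidedIdeal.mk'_span_mul_eq_one (by simp)).trans
      (TwoSidedIdeal.mk'_span_mul_eq_one (by simp)).symm
  fin_cases i <;> fin_cases j
  exacts [Commute.refl _, h, h.symm, Commute.refl _]

protected theorem commute (x y : C1) : Commute x y :=
  Algebra.commute_of_adjoin_eq_top adjoin_range_mk_comp_b
    (by rintro _ ⟨i, rfl⟩ _ ⟨j, rfl⟩; exact commute_mk_b i j) x y

end C1

namespace C2

def mk : FreeAlgebra (ZMod 2) (Fin 3) →+* C2 := RingCon.mk' _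

theorem mk_one_mul_mk_zero : mk (c 1) * mk (c 0) = 1 :=
  TwoSidedIdeal.mk'_span_mul_eq_one (by simp)

theorem mk_one_mul_mk_two : mk (c 1) * mk (c 2) = 1 :=
  TwoSidedIdeal.mk'_span_mul_eq_one (by simp)

def shiftRep : FreeAlgebra (ZMod 2) (Fin 3) →ₐ[ZMod 2] Module.End (ZMod 2) (ℕ → ZMod 2) :=
  FreeAlgebra.lift _ ![seqCons 0, seqShift, seqCons (LinearMap.proj 0)]

theorem mk_zero_ne_mk_two : mk (c 0) ≠ mk (c 2) := by
  have hrel : ∀ x ∈ ({c 1 * c 0 - 1, c 1 * c 2 - 1} : Set _), shiftRep.toRingHom x = 0 := by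
    rintro x (rfl | rfl) <;> simp [shiftRep, c, seqShift_mul_seqCons]
  have hne : (0 : (ℕ → ZMod 2) →ₗ[ZMod 2] ZMod 2) ≠ LinearMap.proj 0 := fun h => by
    simpa using LinearMap.congr_fun h fun _ => 1
  intro h
  have h' : shiftRep (c 0) = shiftRep (c 2) := congrArg (TwoSidedIdeal.liftSpan _ hrel) h
  exact hne (seqCons_injective (by simpa [shiftRep, c] using h'))

end C2

/-- There is no ℤ/2-algebra isomorphism between
`C₁ = ℤ₂⟨a₁, a₂⟩/(1 = a₁a₂ = a₂a₁)` and
`C₂ = ℤ₂⟨a₁, a₂, a₃⟩/(1 = a₂a₁ = a₂a₃)`. -/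
theorem charAlgebras_not_isomorphic : IsEmpty (C1 ≃ₐ[ZMod 2] C2) := by
  refine ⟨fun e => not_forall_commute_of_right_inverses_ne C2.mk_one_mul_mk_zero
    C2.mk_one_mul_mk_two C2.mk_zero_ne_mk_two fun x y => ?_⟩
  simpa using (C1.commute (e.symm x) (e.symm y)).map e

end
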